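/- For every n ≥ 0, j(Δₙ) = F⁽ⁿ⁾; that is, the PBW basis elements defined by the recurrence are exactly the preimages of the divided powers under j. -/
import Mathlib


/-!
Setting: `K = ℚ(q)` is the field of rational functions over `ℚ`; `U⁻ = ℚ(q)[F]` and
`Uⁱ = ℚ(q)[B]` are both realized as `Polynomial K`, with `F` resp. `B` the variable
`Polynomial.X`.
-/

noncomputable section

abbrev K : Type := RatFunc ℚ

/-- The variable `q` of `ℚ(q)`. -/
def q : K := RatFunc.X

/-- The quantum integer `[n] = (qⁿ - q⁻ⁿ)/(q - q⁻¹)`. -/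
def qint (n : ℕ) : K := (q ^ n - q⁻¹ ^ n) / (q - q⁻¹)

/-- The quantum factorial `[n]! = [1][2]⋯[n]`, `[0]! = 1`. -/
def qfact : ℕ → K
  | 0 => 1
  | n + 1 => qfact n * qint (n + 1)

/-- The divided power `F⁽ⁿ⁾ = Fⁿ/[n]!` in `U⁻ = ℚ(q)[F]`. -/
def Fdiv (n : ℕ) : Polynomial K := Polynomial.C (qfact n)⁻¹ * Polynomial.X ^ n

/-- The value of `R` on the monomial `Fⁿ = [n]!·F⁽ⁿ⁾`: for `n ≥ 1` it is
`[n]!·(q^{n-1}/(1-q⁻²))·F⁽ⁿ⁻¹⁾`, which corresponds to `R(F⁽ⁿ⁾) = (q^{n-1}/(1-q⁻²))·F⁽ⁿ⁻¹⁾`,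
and `R(1) = 0`. -/
def Rval : ℕ → Polynomial K
  | 0 => 0
  | n + 1 => (qfact (n + 1) * (q ^ n / (1 - q⁻¹ ^ 2))) • Fdiv n

/-- `R : U⁻ → U⁻`, the unique `ℚ(q)`-linear map with `R(1) = 0` and
`R(F⁽ⁿ⁾) = (q^{n-1}/(1-q⁻²))·F⁽ⁿ⁻¹⁾` for `n ≥ 1`; it is defined by linear extension of
`Rval` from the basis of monomials `Fⁿ`. -/
def Rmap : Polynomial K →ₗ[K] Polynomial K :=
  (Polynomial.basisMonomials K).constr K Rval

/-- `j(Bⁿ)`, defined recursively via `j(1) = 1`, `j(B·u) = F·j(u) + R(j(u))`. -/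
def jval : ℕ → Polynomial K
  | 0 => 1
  | n + 1 => Polynomial.X * jval n + Rmap (jval n)

/-- `j : Uⁱ → U⁻`, the unique `ℚ(q)`-linear map with `j(1) = 1` and
`j(B·u) = F·j(u) + R(j(u))` for all `u ∈ Uⁱ`; it is defined by linear extension of `jval`
from the basis of monomials `Bⁿ`. -/
def jmap : Polynomial K →ₗ[K] Polynomial K :=
  (Polynomial.basisMonomials K).constr K jval

/-- The PBW basis elements `Δₙ ∈ Uⁱ`: `Δ₀ = 1` and
`[n+1]·Δ_{n+1} = B·Δₙ − (q^{n-1}/(1−q⁻²))·Δ_{n−1}` for `n ≥ 0`, interpreting `Δ₋₁ = 0`. -/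
def Δel : ℕ → Polynomial K
  | 0 => 1
  | 1 => (qint 1)⁻¹ • (Polynomial.X : Polynomial K)
  | n + 2 => (qint (n + 2))⁻¹ •
      (Polynomial.X * Δel (n + 1) - (q ^ n / (1 - q⁻¹ ^ 2)) • Δel n)


lemma jmap_pow (n : ℕ) : jmap (Polynomial.X ^ n) = jval n := by
  rw [Polynomial.X_pow_eq_monomial]
  have h := (Polynomial.basisMonomials K).constr_basis K jval n
  rwa [Polynomial.coe_basisMonomials] at h

lemma Rmap_pow (n : ℕ) : Rmap (Polynomial.X ^ n) = Rval n := by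
  rw [Polynomial.X_pow_eq_monomial]
  have h := (Polynomial.basisMonomials K).constr_basis K Rval n
  rwa [Polynomial.coe_basisMonomials] at h

lemma jmap_X_mul (u : Polynomial K) :
    jmap (Polynomial.X * u) = Polynomial.X * jmap u + Rmap (jmap u) := by
  have h : (jmap ∘ₗ LinearMap.mulLeft K (Polynomial.X : Polynomial K)) =
      LinearMap.mulLeft K (Polynomial.X : Polynomial K) ∘ₗ jmap + Rmap ∘ₗ jmap := by
    apply (Polynomial.basisMonomials K).ext
    intro n
    have hb : (Polynomial.basisMonomials K) n = Polynomial.X ^ n := by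
      rw [Polynomial.coe_basisMonomials, Polynomial.X_pow_eq_monomial]
    simp only [hb, LinearMap.comp_apply, LinearMap.add_apply, LinearMap.mulLeft_apply,
      jmap_pow]
    rw [← pow_succ', jmap_pow]
    rfl
  have := congrArg (fun f => f u) h
  simpa using this

lemma q_ne_zero : q ≠ 0 := RatFunc.X_ne_zero

lemma q_pow_ne_one (n : ℕ) (hn : n ≠ 0) : q ^ n ≠ 1 := by
  intro h
  have h2 : (algebraMap (Polynomial ℚ) K) (Polynomial.X ^ n) =
      (algebraMap (Polynomial ℚ) K) 1 := by
    simpa [map_pow, RatFunc.algebraMap_X, q] using h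
  have h3 := IsFractionRing.injective (Polynomial ℚ) K h2
  have h4 := congrArg Polynomial.natDegree h3
  simp [Polynomial.natDegree_X_pow, hn] at h4

lemma q_sub_inv_ne_zero : q - q⁻¹ ≠ 0 := by
  intro h
  have hq := q_ne_zero
  have key : q ^ 2 - 1 = q * (q - q⁻¹) := by
    rw [mul_sub, mul_inv_cancel₀ hq, sq]
  rw [h, mul_zero, sub_eq_zero] at key
  exact q_pow_ne_one 2 (by norm_num) key

lemma one_sub_qinv_sq_ne_zero : (1 : K) - q⁻¹ ^ 2 ≠ 0 := by
  intro h
  have hq := q_ne_zero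
  have key : q ^ 2 - 1 = q ^ 2 * (1 - q⁻¹ ^ 2) := by
    rw [mul_sub, mul_one, ← mul_pow, mul_inv_cancel₀ hq, one_pow]
  rw [h, mul_zero, sub_eq_zero] at key
  exact q_pow_ne_one 2 (by norm_num) key

lemma qint_ne_zero (n : ℕ) (hn : n ≠ 0) : qint n ≠ 0 := by
  have hq := q_ne_zero
  have hnum : q ^ n - q⁻¹ ^ n ≠ 0 := by
    intro h
    have h1 : q ^ n * q⁻¹ ^ n = 1 := by
      rw [← mul_pow, mul_inv_cancel₀ hq, one_pow]
    have hsub : q ^ n = q⁻¹ ^ n := sub_eq_zero.mp h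
    have : q ^ (2 * n) = 1 := by
      rw [two_mul, pow_add]
      nth_rewrite 2 [hsub]
      exact h1
    exact q_pow_ne_one (2 * n) (by omega) this
  exact div_ne_zero hnum q_sub_inv_ne_zero

lemma qfact_ne_zero (n : ℕ) : qfact n ≠ 0 := by
  induction n with
  | zero => simp [qfact]
  | succ k ih => exact mul_ne_zero ih (qint_ne_zero (k+1) (by omega))

lemma Rmap_Fdiv (n : ℕ) :
    Rmap (Fdiv (n+1)) = (q ^ n / (1 - q⁻¹ ^ 2)) • Fdiv n := by
  have h1 : Fdiv (n+1) = (qfact (n+1))⁻¹ • (Polynomial.X ^ (n+1) : Polynomial K) := by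
    rw [Fdiv, Polynomial.smul_eq_C_mul]
  rw [h1, map_smul, Rmap_pow]
  show (qfact (n+1))⁻¹ • ((qfact (n + 1) * (q ^ n / (1 - q⁻¹ ^ 2))) • Fdiv n) = _
  rw [smul_smul, inv_mul_cancel_left₀ (qfact_ne_zero (n+1))]

/-- For every `n ≥ 0`, `j(Δₙ) = F⁽ⁿ⁾`. -/
theorem stmt1 (n : ℕ) : jmap (Δel n) = Fdiv n := by
  induction n using Nat.strong_induction_on with
  | _ n ih =>
    match n with
    | 0 =>
      have h0 : (Δel 0 : Polynomial K) = Polynomial.X ^ 0 := by simp [Δel]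
      rw [h0, jmap_pow]
      simp [jval, Fdiv, qfact]
    | 1 =>
      have hq1 : qint 1 = 1 := by
        rw [qint, pow_one, pow_one, div_self q_sub_inv_ne_zero]
      have hX : jmap (Polynomial.X : Polynomial K) = Polynomial.X := by
        have hp := jmap_pow 1
        rw [pow_one] at hp
        rw [hp]
        show Polynomial.X * jval 0 + Rmap (jval 0) = _
        have h0 : Rmap (jval 0) = 0 := by
          show Rmap ((1 : Polynomial K)) = 0
          have := Rmap_pow 0
          simpa [Rval] using this
        rw [h0]
        simp [jval]
      rw [Δel, map_smul, hX, hq1]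
      simp [Fdiv, qfact, hq1]
    | (m + 2) =>
      have ih1 : jmap (Δel (m+1)) = Fdiv (m+1) := ih (m+1) (by omega)
      have ih0 : jmap (Δel m) = Fdiv m := ih m (by omega)
      rw [Δel, map_smul, map_sub, map_smul, jmap_X_mul, ih1, ih0, Rmap_Fdiv]
      have hz : qint (m+2) ≠ 0 := qint_ne_zero (m+2) (by omega)
      have hf : qfact (m+1) ≠ 0 := qfact_ne_zero (m+1)
      have hthis : qint (m+2) * (qfact (m+2))⁻¹ = (qfact (m+1))⁻¹ := by
        rw [show qfact (m+2) = qfact (m+1) * qint (m+2) from rfl, mul_inv,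
          mul_comm (qfact (m+1))⁻¹ (qint (m+2))⁻¹, ← mul_assoc,
          mul_inv_cancel₀ hz, one_mul]
      have hXF : Polynomial.X * Fdiv (m+1) = qint (m+2) • Fdiv (m+2) := by
        have h1 : Fdiv (m+1) = (qfact (m+1))⁻¹ • (Polynomial.X ^ (m+1) : Polynomial K) := by
          rw [Fdiv, Polynomial.smul_eq_C_mul]
        have h2 : Fdiv (m+2) = (qfact (m+2))⁻¹ • (Polynomial.X ^ (m+2) : Polynomial K) := by
          rw [Fdiv, Polynomial.smul_eq_C_mul]
        rw [h1, h2, smul_smul, hthis, mul_smul_comm, ← pow_succ']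
      rw [hXF, add_sub_assoc, sub_self, add_zero, inv_smul_smul₀ hz]


end
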